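/- For M views, fixing all f_{X_{m'}} for m' ≠ m, the function a ↦ E[(1/2)(y − a − S)² + (ρ/2)Σ_{m'≠m}(a − f_{m'})² + terms not involving a], where S = Σ_{m'≠m} f_{m'}, is minimized over measurable square-integrable functions a = f_m(X_m) by a = E[y/(1+(M−1)ρ) − (1−ρ)S/(1+(M−1)ρ) | X_m]. -/

import Mathlib

/-!
Completing the square in `a`, the partial objective equals its value at
`t = (y - (1 - ρ) S) / (1 + (M - 1) ρ)` plus `(1 + (M - 1) ρ) / 2 · (a - t)²`, so it suffices to
minimize `E[(a - t)²]` over square-integrable functions `a` of `X_m`. The conditional expectation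
`E[t | X_m]` does this: by the pull-out property `a - E[t | X_m]` is orthogonal to `E[t | X_m] - t`,
and Pythagoras gives `E[(a - t)²] = E[(E[t | X_m] - t)²] + E[(a - E[t | X_m])²]`.
-/

open MeasureTheory Finset

section CondExp

variable {Ω : Type*} {m m₀ : MeasurableSpace Ω} {μ : Measure Ω} [IsFiniteMeasure μ]

theorem integral_mul_condExp_of_stronglyMeasurable (hm : m ≤ m₀) {g t : Ω → ℝ}
    (hg : StronglyMeasurable[m] g) (hg₂ : MemLp g 2 μ) (ht : MemLp t 2 μ) :
    ∫ ω, g ω * μ[t | m] ω ∂μ = ∫ ω, g ω * t ω ∂μ :=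
  calc ∫ ω, g ω * μ[t | m] ω ∂μ = ∫ ω, μ[g * t | m] ω ∂μ :=
        integral_congr_ae (condExp_mul_of_stronglyMeasurable_left hg
          (hg₂.integrable_mul ht) (ht.integrable one_le_two)).symm
    _ = ∫ ω, g ω * t ω ∂μ := integral_condExp hm

theorem integral_sq_condExp_sub_le (hm : m ≤ m₀) {g t : Ω → ℝ}
    (hg : StronglyMeasurable[m] g) (hg₂ : MemLp g 2 μ) (ht : MemLp t 2 μ) :
    ∫ ω, (μ[t | m] ω - t ω) ^ 2 ∂μ ≤ ∫ ω, (g ω - t ω) ^ 2 ∂μ := by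
  set a := μ[t | m]
  have ha : MemLp a 2 μ := ht.condExp one_le_two
  have hcross : ∫ ω, (g ω - a ω) * (a ω - t ω) ∂μ = 0 := by
    have horth := integral_mul_condExp_of_stronglyMeasurable hm
      (hg.sub stronglyMeasurable_condExp) (hg₂.sub ha) ht
    simp only [Pi.sub_apply] at horth
    have hint_a : Integrable (fun ω => (g ω - a ω) * a ω) μ := (hg₂.sub ha).integrable_mul ha
    have hint_t : Integrable (fun ω => (g ω - a ω) * t ω) μ := (hg₂.sub ha).integrable_mul ht
    simp only [mul_sub]
    rw [integral_sub hint_a hint_t]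
    exact sub_eq_zero.2 horth
  have hpythagoras : ∫ ω, (g ω - t ω) ^ 2 ∂μ =
      ∫ ω, (a ω - t ω) ^ 2 ∂μ + ∫ ω, (g ω - a ω) ^ 2 ∂μ := by
    have hexpand : ∀ ω, (g ω - t ω) ^ 2 =
        (a ω - t ω) ^ 2 + (g ω - a ω) ^ 2 + 2 * ((g ω - a ω) * (a ω - t ω)) := fun ω => by ring
    have hint_at : Integrable (fun ω => (a ω - t ω) ^ 2) μ := (ha.sub ht).integrable_sq
    have hint_ga : Integrable (fun ω => (g ω - a ω) ^ 2) μ := (hg₂.sub ha).integrable_sq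
    have hint_cross : Integrable (fun ω => 2 * ((g ω - a ω) * (a ω - t ω))) μ :=
      ((hg₂.sub ha).integrable_mul (ha.sub ht)).const_mul 2
    simp_rw [hexpand]
    rw [integral_add (hint_at.fun_add hint_ga) hint_cross, integral_add hint_at hint_ga,
      integral_const_mul, hcross, mul_zero, add_zero]
  rw [hpythagoras]
  exact le_add_of_nonneg_right (integral_nonneg fun ω => sq_nonneg _)

end CondExp

section CoopLoss

variable {ι : Type*} (s : Finset ι) (ρ y : ℝ) (f : ι → ℝ)

noncomputable def coopLoss (a : ℝ) : ℝ :=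
  1 / 2 * (y - a - ∑ i ∈ s, f i) ^ 2 + ρ / 2 * ∑ i ∈ s, (a - f i) ^ 2

noncomputable def coopTarget : ℝ :=
  y / (1 + #s * ρ) - (1 - ρ) * (∑ i ∈ s, f i) / (1 + #s * ρ)

theorem coopLoss_eq_add_sq (hc : 1 + #s * ρ ≠ 0) (a : ℝ) :
    coopLoss s ρ y f a =
      coopLoss s ρ y f (coopTarget s ρ y f) + (1 + #s * ρ) / 2 * (a - coopTarget s ρ y f) ^ 2 := by
  have hsum : ∀ b, ∑ i ∈ s, (b - f i) ^ 2 = #s * b ^ 2 - 2 * b * ∑ i ∈ s, f i + ∑ i ∈ s, f i ^ 2 := by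
    intro b
    simp only [sub_sq, sum_add_distrib, sum_sub_distrib, sum_const, nsmul_eq_mul, ← mul_sum]
  have htarget : y = (1 + #s * ρ) * coopTarget s ρ y f + (1 - ρ) * ∑ i ∈ s, f i := by
    rw [coopTarget]
    field_simp
    ring
  simp only [coopLoss, hsum]
  generalize coopTarget s ρ y f = t at htarget ⊢
  subst htarget
  ring

end CoopLoss

section IntegralCoopLoss

variable {Ω ι : Type*} [MeasurableSpace Ω] {μ : Measure Ω} {s : Finset ι} {ρ : ℝ}
  {y : Ω → ℝ} {f : ι → Ω → ℝ}

theorem memLp_coopTarget (hy : MemLp y 2 μ) (hf : ∀ i ∈ s, MemLp (f i) 2 μ) :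
    MemLp (fun ω => coopTarget s ρ (y ω) (f · ω)) 2 μ := by
  simp only [coopTarget, div_eq_mul_inv]
  exact (hy.mul_const _).sub (((memLp_finsetSum s hf).const_mul _).mul_const _)

theorem integrable_coopLoss (hy : MemLp y 2 μ) (hf : ∀ i ∈ s, MemLp (f i) 2 μ) {a : Ω → ℝ}
    (ha : MemLp a 2 μ) : Integrable (fun ω => coopLoss s ρ (y ω) (f · ω) (a ω)) μ := by
  simp only [coopLoss]
  exact (((hy.sub ha).sub (memLp_finsetSum s hf)).integrable_sq.const_mul _).add
    ((integrable_finsetSum s fun i hi => (ha.sub (hf i hi)).integrable_sq).const_mul _)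

theorem integral_coopLoss_eq (hc : 1 + #s * ρ ≠ 0) (hy : MemLp y 2 μ)
    (hf : ∀ i ∈ s, MemLp (f i) 2 μ) {a : Ω → ℝ} (ha : MemLp a 2 μ) :
    ∫ ω, coopLoss s ρ (y ω) (f · ω) (a ω) ∂μ =
      ∫ ω, coopLoss s ρ (y ω) (f · ω) (coopTarget s ρ (y ω) (f · ω)) ∂μ +
        (1 + #s * ρ) / 2 * ∫ ω, (a ω - coopTarget s ρ (y ω) (f · ω)) ^ 2 ∂μ := by
  have ht := memLp_coopTarget (ρ := ρ) hy hf
  have hsq : Integrable (fun ω => (1 + #s * ρ) / 2 * (a ω - coopTarget s ρ (y ω) (f · ω)) ^ 2) μ :=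
    (ha.sub ht).integrable_sq.const_mul _
  simp_rw [coopLoss_eq_add_sq s ρ _ _ hc (a _)]
  rw [integral_add (integrable_coopLoss hy hf ht) hsq, integral_const_mul]

end IntegralCoopLoss

theorem coop_multiview_update_general
    {Ω E : Type*} [MeasurableSpace Ω] [MeasurableSpace E]
    (μ : Measure Ω) [IsProbabilityMeasure μ]
    (M : ℕ) (ρ : ℝ) (hρ : 0 ≤ ρ)
    (X : Fin M → Ω → E) (m : Fin M) (hXm : Measurable (X m))
    (y : Ω → ℝ) (hy : MemLp y 2 μ)
    (f : Fin M → Ω → ℝ)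
    (hf : ∀ m' : Fin M, MemLp (f m') 2 μ)
    (S : Ω → ℝ) (hS : S = fun ω => ∑ m' ∈ univ.erase m, f m' ω)
    (astar : Ω → ℝ)
    (hastar : astar = μ[fun ω =>
        y ω / (1 + (M - 1 : ℝ) * ρ) - (1 - ρ) * S ω / (1 + (M - 1 : ℝ) * ρ) |
      MeasurableSpace.comap (X m) inferInstance]) :
    ∀ g : E → ℝ, Measurable g → MemLp (fun ω => g (X m ω)) 2 μ →
      (∫ ω, ((1 / 2) * (y ω - astar ω - S ω) ^ 2 +
          (ρ / 2) * ∑ m' ∈ univ.erase m, (astar ω - f m' ω) ^ 2) ∂μ) ≤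
        ∫ ω, ((1 / 2) * (y ω - g (X m ω) - S ω) ^ 2 +
          (ρ / 2) * ∑ m' ∈ univ.erase m, (g (X m ω) - f m' ω) ^ 2) ∂μ := by
  intro g hg hgL2
  subst hS
  have hcard : (#(univ.erase m) : ℝ) = M - 1 := by
    rw [card_erase_of_mem (mem_univ m), card_univ, Fintype.card_fin, Nat.cast_pred m.pos]
  have hc : 0 < 1 + (#(univ.erase m) : ℝ) * ρ := by positivity
  have hf' : ∀ i ∈ univ.erase m, MemLp (f i) 2 μ := fun i _ => hf i
  have ht := memLp_coopTarget (ρ := ρ) hy hf'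
  have hastar' : astar = μ[fun ω => coopTarget (univ.erase m) ρ (y ω) (f · ω) |
      MeasurableSpace.comap (X m) inferInstance] := by
    simp only [hastar, coopTarget, hcard]
  change ∫ ω, coopLoss (univ.erase m) ρ (y ω) (f · ω) (astar ω) ∂μ ≤
    ∫ ω, coopLoss (univ.erase m) ρ (y ω) (f · ω) (g (X m ω)) ∂μ
  rw [integral_coopLoss_eq hc.ne' hy hf' hgL2, hastar',
    integral_coopLoss_eq hc.ne' hy hf' (ht.condExp one_le_two)]
  have hgX : StronglyMeasurable[MeasurableSpace.comap (X m) inferInstance] (fun ω => g (X m ω)) :=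
    (hg.comp (comap_measurable (X m))).stronglyMeasurable
  gcongr _ + _ * ?_
  exact integral_sq_condExp_sub_le hXm.comap_le hgX hgL2 ht

/-- Multiview one-at-a-time update: fixing all views but `m`, the partial cooperative
objective over square-integrable functions of `X_m` is minimized by
`E[y/(1+(M−1)ρ) − (1−ρ)S/(1+(M−1)ρ) | X_m]`, where `S` is the sum of the other fits. -/
theorem coop_multiview_update
    {Ω E : Type*} [MeasurableSpace Ω] [MeasurableSpace E]
    (μ : Measure Ω) [IsProbabilityMeasure μ]
    (M : ℕ) (hM : 2 ≤ M) (ρ : ℝ) (hρ : 0 ≤ ρ)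
    (X : Fin M → Ω → E) (m : Fin M) (hXm : Measurable (X m))
    (y : Ω → ℝ) (hy : MemLp y 2 μ)
    (f : Fin M → Ω → ℝ)
    (hf : ∀ m' : Fin M, MemLp (f m') 2 μ)
    (S : Ω → ℝ) (hS : S = fun ω => ∑ m' ∈ univ.erase m, f m' ω)
    (astar : Ω → ℝ)
    (hastar : astar = μ[fun ω =>
        y ω / (1 + (M - 1 : ℝ) * ρ) - (1 - ρ) * S ω / (1 + (M - 1 : ℝ) * ρ) |
      MeasurableSpace.comap (X m) inferInstance]) :
    ∀ g : E → ℝ, Measurable g → MemLp (fun ω => g (X m ω)) 2 μ →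
      (∫ ω, ((1 / 2) * (y ω - astar ω - S ω) ^ 2 +
          (ρ / 2) * ∑ m' ∈ univ.erase m, (astar ω - f m' ω) ^ 2) ∂μ) ≤
        ∫ ω, ((1 / 2) * (y ω - g (X m ω) - S ω) ^ 2 +
          (ρ / 2) * ∑ m' ∈ univ.erase m, (g (X m ω) - f m' ω) ^ 2) ∂μ :=
  coop_multiview_update_general μ M ρ hρ X m hXm y hy f hf S hS astar hastar
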